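/- Let R = R(a_1,…,a_l) and R'' = R(a_1,…,a_l, a_{l+1},…,a_m) be nested top-l and top-m partial rankings in S_n (so R'' ⊆ R). Then for every σ ∈ R, the Kendall distances satisfy d(σ, Π_{R''}(σ)) = (n − m)(m − l) + C(m−l, 2) − d(A_R(σ), Π_{R''}(A_R(σ))). -/

import Mathlib

/-!
For a pair of items, the projection `Π_{R''}(τ)` ranks it as `τ` does when both items lie outside
the top `m`, and as every ranking of `R` does when one of them lies in the top `l`, since all
rankings of `R'' ⊆ R` order such a pair alike. On the remaining pairs (both items outside the top
`l`, at least one in the top `m`) the projections of `σ` and of `A_R(σ)` agree, while `σ` and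
`A_R(σ)` disagree. So each of these `C(n-l, 2) - C(n-m, 2) = (n-m)(m-l) + C(m-l, 2)` pairs is
counted by exactly one of the two distances, and no other pair is counted.
-/

/-- The Kendall (tau) distance between two permutations of `Fin n`:
the number of pairs `(x, y)` with `x < y` on which `σ⁻¹` and `τ⁻¹`
disagree in relative order. -/
def kendallDist {n : ℕ} (σ τ : Equiv.Perm (Fin n)) : ℕ :=
  (Finset.univ.filter (fun p : Fin n × Fin n =>
    p.1 < p.2 ∧ ¬((σ⁻¹ p.1 < σ⁻¹ p.2) ↔ (τ⁻¹ p.1 < τ⁻¹ p.2)))).card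

/-- The top-`k` partial ranking determined by the items `a 0, …, a (k-1)`:
the set of full rankings (permutations) `σ` with `σ i = a i` for the first
`k` positions. -/
def topkFinset {n k : ℕ} (hk : k ≤ n) (a : Fin k → Fin n) :
    Finset (Equiv.Perm (Fin n)) :=
  Finset.univ.filter fun σ => ∀ i : Fin k, σ (Fin.castLE hk i) = a i

/-- The permutation of `Fin n` fixing the first `k` positions and reversing
the order of the remaining `n - k` positions. -/
def revAfter (n k : ℕ) : Equiv.Perm (Fin n) :=
  Function.Involutive.toPerm
    (fun p => if _h : (p : ℕ) < k then p
      else ⟨n + k - 1 - (p : ℕ), by have := p.isLt; omega⟩)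
    (by
      intro p
      have hp := p.isLt
      by_cases h : (p : ℕ) < k
      · simp [h]
      · have h2 : ¬ (n + k - 1 - (p : ℕ) < k) := by omega
        simp only [dif_neg h, dif_neg h2]
        ext
        simp
        omega)

/-- The antithetic permutation of `σ` relative to a top-`k` partial ranking:
the first `k` positions are unchanged and the remaining positions are
reversed, i.e. `A σ (k+j) = σ (n+1-j)` (in 1-indexed notation). -/
def antithetic (n k : ℕ) (σ : Equiv.Perm (Fin n)) : Equiv.Perm (Fin n) :=
  σ * revAfter n k

open Finset Equiv

section Reversal

variable {n k : ℕ}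

theorem revAfter_apply_of_lt {p : Fin n} (hp : (p : ℕ) < k) : revAfter n k p = p :=
  dif_pos hp

theorem val_revAfter_of_le {p : Fin n} (hp : k ≤ (p : ℕ)) :
    (revAfter n k p : ℕ) = n + k - 1 - p :=
  congrArg Fin.val (dif_neg (Nat.not_lt.mpr hp))

theorem revAfter_inv : (revAfter n k)⁻¹ = revAfter n k :=
  Function.Involutive.toPerm_symm _

theorem antithetic_inv_apply (σ : Perm (Fin n)) (x : Fin n) :
    (antithetic n k σ)⁻¹ x = revAfter n k (σ⁻¹ x) := by
  rw [antithetic, mul_inv_rev, Perm.mul_apply, revAfter_inv]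

theorem antithetic_inv_lt_iff {σ : Perm (Fin n)} {x y : Fin n} (hxy : x ≠ y)
    (hx : k ≤ (σ⁻¹ x : ℕ)) (hy : k ≤ (σ⁻¹ y : ℕ)) :
    (antithetic n k σ)⁻¹ x < (antithetic n k σ)⁻¹ y ↔ ¬σ⁻¹ x < σ⁻¹ y := by
  have hne : (σ⁻¹ x : ℕ) ≠ σ⁻¹ y := fun h => hxy (σ⁻¹.injective (Fin.ext h))
  rw [antithetic_inv_apply, antithetic_inv_apply, Fin.lt_def, Fin.lt_def,
    val_revAfter_of_le hx, val_revAfter_of_le hy]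
  omega

end Reversal

abbrev Discordant {n : ℕ} (ρ τ : Perm (Fin n)) (x y : Fin n) : Prop :=
  ¬((ρ⁻¹ x < ρ⁻¹ y) ↔ (τ⁻¹ x < τ⁻¹ y))

theorem kendallDist_comm {n : ℕ} (ρ τ : Perm (Fin n)) : kendallDist ρ τ = kendallDist τ ρ := by
  simp only [kendallDist, iff_comm]

section TopK

variable {n k : ℕ} {hk : k ≤ n} {b : Fin k → Fin n} {ρ τ : Perm (Fin n)} {x y : Fin n}

theorem mem_topkFinset : ρ ∈ topkFinset hk b ↔ ∀ i, ρ (Fin.castLE hk i) = b i := by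
  simp [topkFinset]

theorem inv_apply_of_mem_topkFinset (hρ : ρ ∈ topkFinset hk b) (i : Fin k) :
    ρ⁻¹ (b i) = Fin.castLE hk i := by
  rw [← mem_topkFinset.mp hρ i]
  exact ρ.symm_apply_apply _

theorem injective_of_mem_topkFinset (hρ : ρ ∈ topkFinset hk b) : Function.Injective b := by
  have hb : b = ρ ∘ Fin.castLE hk := funext fun i => (mem_topkFinset.mp hρ i).symm
  exact hb ▸ ρ.injective.comp (Fin.castLE_injective hk)

theorem mem_range_iff_of_mem_topkFinset (hρ : ρ ∈ topkFinset hk b) :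
    x ∈ Set.range b ↔ (ρ⁻¹ x : ℕ) < k := by
  constructor
  · rintro ⟨i, rfl⟩
    simp [inv_apply_of_mem_topkFinset hρ i]
  · intro hx
    refine ⟨⟨ρ⁻¹ x, hx⟩, ?_⟩
    rw [← mem_topkFinset.mp hρ]
    exact ρ.apply_symm_apply x

theorem inv_apply_eq_of_mem_range (hρ : ρ ∈ topkFinset hk b) (hτ : τ ∈ topkFinset hk b)
    (hx : x ∈ Set.range b) : ρ⁻¹ x = τ⁻¹ x := by
  obtain ⟨i, rfl⟩ := hx
  rw [inv_apply_of_mem_topkFinset hρ, inv_apply_of_mem_topkFinset hτ]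

theorem not_discordant_of_mem_topkFinset (hρ : ρ ∈ topkFinset hk b) (hτ : τ ∈ topkFinset hk b)
    (h : x ∈ Set.range b ∨ y ∈ Set.range b) : ¬Discordant ρ τ x y := by
  have key : ∀ z, ((ρ⁻¹ z : ℕ) < k ↔ (τ⁻¹ z : ℕ) < k) ∧
      ((ρ⁻¹ z : ℕ) < k → (ρ⁻¹ z : ℕ) = τ⁻¹ z) := fun z =>
    ⟨(mem_range_iff_of_mem_topkFinset hρ).symm.trans (mem_range_iff_of_mem_topkFinset hτ),
      fun hz => congrArg Fin.val (inv_apply_eq_of_mem_range hρ hτ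
        ((mem_range_iff_of_mem_topkFinset hρ).mpr hz))⟩
  rw [mem_range_iff_of_mem_topkFinset hρ, mem_range_iff_of_mem_topkFinset hρ] at h
  have := key x
  have := key y
  rw [Discordant, Fin.lt_def, Fin.lt_def]
  omega

theorem card_filter_notMem_range (hρ : ρ ∈ topkFinset hk b) :
    #{x | x ∉ Set.range b} = n - k := by
  rw [filter_not, card_sdiff_of_subset (filter_subset _ _), card_univ, Fintype.card_fin]
  have hrange : ({x | x ∈ Set.range b} : Finset (Fin n)) = univ.image b := by
    ext
    simp
  rw [hrange, card_image_of_injective _ (injective_of_mem_topkFinset hρ), card_univ,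
    Fintype.card_fin]

theorem topkFinset_subset_castLE {m : ℕ} (hkm : k ≤ m) (hm : m ≤ n) (a : Fin m → Fin n) :
    topkFinset hm a ⊆ topkFinset (hkm.trans hm) (a ∘ Fin.castLE hkm) := by
  intro ρ hρ
  rw [mem_topkFinset] at hρ ⊢
  exact fun i => hρ (Fin.castLE hkm i)

theorem antithetic_mem_topkFinset (hρ : ρ ∈ topkFinset hk b) :
    antithetic n k ρ ∈ topkFinset hk b := by
  rw [mem_topkFinset] at hρ ⊢
  intro i
  rw [antithetic, Perm.mul_apply, revAfter_apply_of_lt (by simp), hρ]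

end TopK

section Projection

variable {n : ℕ}

theorem exists_perm_inv_lt_iff {α : Type*} [LinearOrder α] {f : Fin n → α}
    (hf : Function.Injective f) : ∃ ρ : Perm (Fin n), ∀ x y, ρ⁻¹ x < ρ⁻¹ y ↔ f x < f y := by
  have hmono : StrictMono (f ∘ Tuple.sort f) :=
    (Tuple.monotone_sort f).strictMono_of_injective (hf.comp (Tuple.sort f).injective)
  refine ⟨Tuple.sort f, fun x y => ?_⟩
  simpa using (hmono.lt_iff_lt (a := (Tuple.sort f)⁻¹ x) (b := (Tuple.sort f)⁻¹ y)).symm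

theorem card_filter_inv_lt (π : Perm (Fin n)) (p : Fin n) : #{y | π⁻¹ y < p} = p := by
  rw [← Fin.card_Iio p]
  exact card_equiv π⁻¹ (by simp)

theorem inv_apply_eq_of_forall_inv_lt_iff {ρ τ : Perm (Fin n)} {z : Fin n}
    (h : ∀ y, ρ⁻¹ y < ρ⁻¹ z ↔ τ⁻¹ y < τ⁻¹ z) : ρ⁻¹ z = τ⁻¹ z := by
  apply Fin.ext
  rw [← card_filter_inv_lt ρ, ← card_filter_inv_lt τ]
  exact congrArg card (filter_congr fun y _ => h y)

variable {k : ℕ} {hk : k ≤ n} {b : Fin k → Fin n}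

/-- `ρ` is the projection `Π_R(τ)` onto `R = topkFinset hk b`. -/
theorem exists_mem_topkFinset_forall_not_discordant {ρ₀ : Perm (Fin n)}
    (hρ₀ : ρ₀ ∈ topkFinset hk b) (τ : Perm (Fin n)) :
    ∃ ρ ∈ topkFinset hk b, ∀ x ∉ Set.range b, ∀ y ∉ Set.range b, ¬Discordant ρ τ x y := by
  -- `ρ₀` supplies the positions of the top items; the others follow them in `τ`'s order
  let f : Fin n → ℕ := fun x => if (ρ₀⁻¹ x : ℕ) < k then ρ₀⁻¹ x else n + τ⁻¹ x
  have hf : Function.Injective f := by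
    intro x y hxy
    have := (ρ₀⁻¹ x).isLt
    have := (ρ₀⁻¹ y).isLt
    simp only [f] at hxy
    split_ifs at hxy
    · exact ρ₀⁻¹.injective (Fin.ext hxy)
    · omega
    · omega
    · exact τ⁻¹.injective (Fin.ext (by omega))
  obtain ⟨ρ, hρ⟩ := exists_perm_inv_lt_iff hf
  refine ⟨ρ, mem_topkFinset.mpr fun i => ?_, fun x hx y hy => ?_⟩
  · have hbi := inv_apply_of_mem_topkFinset hρ₀ i
    have hρbi : ρ⁻¹ (b i) = ρ₀⁻¹ (b i) := inv_apply_eq_of_forall_inv_lt_iff fun y => by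
      have := (ρ₀⁻¹ y).isLt
      rw [hρ, Fin.lt_def, hbi]
      simp only [f, hbi, Fin.val_castLE, i.isLt, if_true]
      split_ifs <;> omega
    rw [← ρ.apply_symm_apply (b i)]
    exact congrArg ρ (hρbi.trans hbi).symm
  · rw [mem_range_iff_of_mem_topkFinset hρ₀, not_lt] at hx hy
    rw [Discordant, hρ, Fin.lt_def (a := τ⁻¹ x)]
    simp only [f, Nat.not_lt.mpr hx, Nat.not_lt.mpr hy, if_false]
    omega

theorem kendallDist_le_of_forall_not_discordant {ρ τ : Perm (Fin n)} (hρ : ρ ∈ topkFinset hk b)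
    (hρτ : ∀ x ∉ Set.range b, ∀ y ∉ Set.range b, ¬Discordant ρ τ x y) {π : Perm (Fin n)}
    (hπ : π ∈ topkFinset hk b) : kendallDist ρ τ ≤ kendallDist π τ := by
  refine card_le_card fun p hp => ?_
  simp only [mem_filter, mem_univ, true_and] at hp ⊢
  refine ⟨hp.1, ?_⟩
  by_cases h : p.1 ∈ Set.range b ∨ p.2 ∈ Set.range b
  · have := not_discordant_of_mem_topkFinset hρ hπ h
    tauto
  · push Not at h
    exact absurd hp.2 (hρτ _ h.1 _ h.2)

end Projection

theorem Nat.add_choose_two (a b : ℕ) : (a + b).choose 2 = a.choose 2 + a * b + b.choose 2 := by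
  rw [Nat.add_choose_eq]
  simp [Finset.Nat.antidiagonal_succ]
  ring

theorem card_filter_lt_mem {α : Type*} [Fintype α] [LinearOrder α] (s : Finset α) :
    #{p : α × α | p.1 < p.2 ∧ p.1 ∈ s ∧ p.2 ∈ s} = (#s).choose 2 := by
  rw [← card_product_filter_lt]
  congr 1
  ext p
  simp only [mem_filter, mem_univ, mem_product, true_and]
  tauto

section Antithetic

variable {n l m : ℕ} {hlm : l ≤ m} {hm : m ≤ n} {a : Fin m → Fin n} {σ ρ ρ' : Perm (Fin n)}

theorem discordant_iff_not_discordant_antithetic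
    (hσ : σ ∈ topkFinset (hlm.trans hm) (a ∘ Fin.castLE hlm)) (hρ : ρ ∈ topkFinset hm a)
    (hρ' : ρ' ∈ topkFinset hm a) {x y : Fin n} (hxy : x ≠ y)
    (hx : x ∉ Set.range (a ∘ Fin.castLE hlm)) (hy : y ∉ Set.range (a ∘ Fin.castLE hlm))
    (h : x ∈ Set.range a ∨ y ∈ Set.range a) :
    Discordant ρ σ x y ↔ ¬Discordant ρ' (antithetic n l σ) x y := by
  rw [mem_range_iff_of_mem_topkFinset hσ, not_lt] at hx hy
  have hρρ' := not_discordant_of_mem_topkFinset hρ hρ' h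
  rw [Discordant, Discordant, antithetic_inv_lt_iff hxy hx hy]
  tauto

theorem discordant_count_add_antithetic
    (hσ : σ ∈ topkFinset (hlm.trans hm) (a ∘ Fin.castLE hlm)) (hρ : ρ ∈ topkFinset hm a)
    (hρ' : ρ' ∈ topkFinset hm a)
    (hρσ : ∀ x ∉ Set.range a, ∀ y ∉ Set.range a, ¬Discordant ρ σ x y)
    (hρ'σ : ∀ x ∉ Set.range a, ∀ y ∉ Set.range a, ¬Discordant ρ' (antithetic n l σ) x y)
    {x y : Fin n} (hxy : x ≠ y) :
    (if Discordant ρ σ x y then 1 else 0) + (if Discordant ρ' (antithetic n l σ) x y then 1 else 0)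
      + (if x ∉ Set.range a ∧ y ∉ Set.range a then 1 else 0)
      = if x ∉ Set.range (a ∘ Fin.castLE hlm) ∧ y ∉ Set.range (a ∘ Fin.castLE hlm) then 1 else 0 := by
  have hsub := topkFinset_subset_castLE hlm hm a
  have hrange : Set.range (a ∘ Fin.castLE hlm) ⊆ Set.range a := Set.range_comp_subset_range _ _
  by_cases h₀ : x ∈ Set.range (a ∘ Fin.castLE hlm) ∨ y ∈ Set.range (a ∘ Fin.castLE hlm)
  · have h₁ := not_discordant_of_mem_topkFinset (hsub hρ) hσ h₀
    have h₂ := not_discordant_of_mem_topkFinset (hsub hρ') (antithetic_mem_topkFinset hσ) h₀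
    have h₃ : ¬(x ∉ Set.range a ∧ y ∉ Set.range a) := by
      have := h₀.imp (@hrange x) (@hrange y)
      tauto
    rw [if_neg h₁, if_neg h₂, if_neg h₃, if_neg (by tauto)]
  push Not at h₀
  by_cases h : x ∈ Set.range a ∨ y ∈ Set.range a
  · have h₁ := discordant_iff_not_discordant_antithetic hσ hρ hρ' hxy h₀.1 h₀.2 h
    have h₃ : ¬(x ∉ Set.range a ∧ y ∉ Set.range a) := by tauto
    by_cases h₂ : Discordant ρ' (antithetic n l σ) x y
    · rw [if_neg fun hd => h₁.mp hd h₂, if_pos h₂, if_neg h₃, if_pos h₀]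
    · rw [if_pos (h₁.mpr h₂), if_neg h₂, if_neg h₃, if_pos h₀]
  · push Not at h
    rw [if_neg (hρσ x h.1 y h.2), if_neg (hρ'σ x h.1 y h.2), if_pos h, if_pos h₀]

theorem kendallDist_add_kendallDist_antithetic
    (hσ : σ ∈ topkFinset (hlm.trans hm) (a ∘ Fin.castLE hlm)) (hρ : ρ ∈ topkFinset hm a)
    (hρ' : ρ' ∈ topkFinset hm a)
    (hρσ : ∀ x ∉ Set.range a, ∀ y ∉ Set.range a, ¬Discordant ρ σ x y)
    (hρ'σ : ∀ x ∉ Set.range a, ∀ y ∉ Set.range a, ¬Discordant ρ' (antithetic n l σ) x y) :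
    kendallDist ρ σ + kendallDist ρ' (antithetic n l σ) + (n - m).choose 2 = (n - l).choose 2 := by
  rw [← card_filter_notMem_range hρ,
    ← card_filter_notMem_range (topkFinset_subset_castLE hlm hm a hρ),
    ← card_filter_lt_mem, ← card_filter_lt_mem]
  simp only [kendallDist, card_filter, ← sum_add_distrib, mem_filter, mem_univ, true_and]
  refine sum_congr rfl fun ⟨x, y⟩ _ => ?_
  by_cases hxy : x < y
  · simpa only [hxy, true_and] using
      discordant_count_add_antithetic hσ hρ hρ' hρσ hρ'σ hxy.ne
  · simp [hxy]

end Antithetic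

theorem dist_to_proj_antithetic_general {n l m : ℕ} (hlm : l ≤ m) (hm : m ≤ n)
    (a : Fin m → Fin n)
    (pr : Equiv.Perm (Fin n) → Equiv.Perm (Fin n))
    (hpr : ∀ τ, pr τ ∈ topkFinset hm a ∧
      ∀ ρ ∈ topkFinset hm a, kendallDist (pr τ) τ ≤ kendallDist ρ τ)
    (σ : Equiv.Perm (Fin n))
    (hσ : σ ∈ topkFinset (hlm.trans hm) (a ∘ Fin.castLE hlm)) :
    (kendallDist σ (pr σ) : ℤ) =
      ((n : ℤ) - m) * ((m : ℤ) - l) + ((m - l).choose 2 : ℤ)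
        - (kendallDist (antithetic n l σ) (pr (antithetic n l σ)) : ℤ) := by
  set A := antithetic n l σ
  obtain ⟨ρ, hρ, hρσ⟩ := exists_mem_topkFinset_forall_not_discordant (hpr σ).1 σ
  obtain ⟨ρ', hρ', hρ'A⟩ := exists_mem_topkFinset_forall_not_discordant (hpr A).1 A
  have hσρ : kendallDist σ (pr σ) = kendallDist ρ σ := by
    rw [kendallDist_comm]
    exact le_antisymm ((hpr σ).2 ρ hρ)
      (kendallDist_le_of_forall_not_discordant hρ hρσ (hpr σ).1)
  have hAρ' : kendallDist A (pr A) = kendallDist ρ' A := by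
    rw [kendallDist_comm]
    exact le_antisymm ((hpr A).2 ρ' hρ')
      (kendallDist_le_of_forall_not_discordant hρ' hρ'A (hpr A).1)
  have hsum := kendallDist_add_kendallDist_antithetic hσ hρ hρ' hρσ hρ'A
  rw [show n - l = (n - m) + (m - l) by omega, Nat.add_choose_two] at hsum
  rw [hσρ, hAρ']
  zify [hlm, hm] at hsum
  linarith

/-- For nested top-`l` and top-`m` partial rankings
`R = R(a_1,…,a_l) ⊇ R'' = R(a_1,…,a_m)` and every `σ ∈ R`, the Kendall
distances satisfy
`d(σ, Π_{R''}(σ)) = (n − m)(m − l) + C(m−l, 2) − d(A_R(σ), Π_{R''}(A_R(σ)))`.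
Here `pr` is any fixed choice function selecting the Kendall-closest element
of `R''`. -/
theorem dist_to_proj_antithetic {n l m : ℕ} (hlm : l ≤ m) (hm : m ≤ n)
    (a : Fin m → Fin n) (ha : Function.Injective a)
    (pr : Equiv.Perm (Fin n) → Equiv.Perm (Fin n))
    (hpr : ∀ τ, pr τ ∈ topkFinset hm a ∧
      ∀ ρ ∈ topkFinset hm a, kendallDist (pr τ) τ ≤ kendallDist ρ τ)
    (σ : Equiv.Perm (Fin n))
    (hσ : σ ∈ topkFinset (hlm.trans hm) (a ∘ Fin.castLE hlm)) :
    (kendallDist σ (pr σ) : ℤ) =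
      ((n : ℤ) - m) * ((m : ℤ) - l) + ((m - l).choose 2 : ℤ)
        - (kendallDist (antithetic n l σ) (pr (antithetic n l σ)) : ℤ) :=
  dist_to_proj_antithetic_general hlm hm a pr hpr σ hσ
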